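/- arXiv:2510.08148 — 5 statements merged into one kernel-verified Lean document; each statement's English description precedes it below -/
import Mathlib

section
/- B · D · Bᵀ equals the diagonal 0/1 matrix selecting the rows in the image of Z: for all row indices r, s, the (r,s)-entry of B D Bᵀ equals 1 if r = s and r = Z j for some j ∈ I_Z, and equals 0 otherwise. (Key computation underlying Lemma 3.4: with selection scaling, B D Bᵀ acts as the identity on the Lagrange multipliers of non-vertex constraints and annihilates the remaining ones.) -/
open Matrix

open Classical in
/-- With selection scaling, `B * D * Bᵀ` is the diagonal 0/1 matrix selecting
the rows in the image of `Z`. -/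
theorem BDBt_eq_selection {m n : ℕ} (hm : 0 < m) (hn : 0 < n)
    (B : Matrix (Fin m) (Fin n) ℝ)
    (hB : ∀ r : Fin m, ∃ jr : Fin n, B r jr = 1 ∧ ∀ j : Fin n, j ≠ jr → B r j ≤ 0)
    (IZ : Finset (Fin n))
    (hIZ : ∀ j : Fin n, j ∈ IZ ↔
      ∃ r : Fin m, B r j = 1 ∧ ∀ r' : Fin m, r' ≠ r → B r' j = 0)
    (Z : Fin n → Fin m)
    (hZ : ∀ j ∈ IZ, B (Z j) j = 1 ∧ ∀ r : Fin m, r ≠ Z j → B r j = 0)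
    (D : Matrix (Fin n) (Fin n) ℝ)
    (hD : D = Matrix.diagonal (fun j => if j ∈ IZ then (1 : ℝ) else 0)) :
    ∀ r s : Fin m, (B * D * Bᵀ) r s =
      if r = s ∧ ∃ j ∈ IZ, Z j = r then (1 : ℝ) else 0 := by
  subst hD
  intro r s
  have hBentry : ∀ (t : Fin m) (j : Fin n), j ∈ IZ →
      B t j = if t = Z j then 1 else 0 := by
    intro t j hj
    by_cases h : t = Z j
    · simp [h, (hZ j hj).1]
    · simp [h, (hZ j hj).2 t h]
  have huniq : ∀ j ∈ IZ, ∀ j' ∈ IZ, Z j = Z j' → j = j' := by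
    intro j hj j' hj' he
    obtain ⟨jr, hjr1, hjr2⟩ := hB (Z j)
    have h1 : B (Z j) j = 1 := (hZ j hj).1
    have h2 : B (Z j) j' = 1 := by rw [he]; exact (hZ j' hj').1
    have e1 : j = jr := by
      by_contra h
      have := hjr2 j h; linarith
    have e2 : j' = jr := by
      by_contra h
      have := hjr2 j' h; linarith
    rw [e1, e2]
  have hmul : (B * Matrix.diagonal (fun j => if j ∈ IZ then (1 : ℝ) else 0) * Bᵀ) r s
      = ∑ j ∈ IZ, (if r = Z j then (1 : ℝ) else 0) * (if s = Z j then 1 else 0) := by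
    rw [Matrix.mul_apply]
    simp only [Matrix.mul_diagonal, Matrix.transpose_apply]
    have : ∀ j : Fin n, B r j * (if j ∈ IZ then (1 : ℝ) else 0) * B s j
        = if j ∈ IZ then (if r = Z j then (1 : ℝ) else 0) * (if s = Z j then 1 else 0) else 0 := by
      intro j
      by_cases hj : j ∈ IZ
      · simp [hj, hBentry r j hj, hBentry s j hj]
      · simp [hj]
    rw [Finset.sum_congr rfl fun j _ => this j]
    rw [Finset.sum_ite_mem, Finset.univ_inter]
  rw [hmul]
  by_cases hc : r = s ∧ ∃ j ∈ IZ, Z j = r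
  · obtain ⟨hrs, j0, hj0, hZj0⟩ := hc
    rw [if_pos ⟨hrs, j0, hj0, hZj0⟩]
    rw [Finset.sum_eq_single j0]
    · simp [hZj0.symm, ← hrs]
    · intro j hj hne
      have : ¬ r = Z j := by
        intro h
        exact hne (huniq j hj j0 hj0 (by rw [← h, hZj0]))
      simp [this]
    · intro h; exact absurd hj0 h
  · rw [if_neg hc]
    apply Finset.sum_eq_zero
    intro j hj
    by_cases h1 : r = Z j
    · by_cases h2 : s = Z j
      · exact absurd ⟨h1.trans h2.symm, j, hj, h1.symm⟩ hc
      · simp [h2]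
    · simp [h1]
end

section
/- Let C be any p×n real matrix all of whose columns indexed by I_Z are zero (C s j = 0 for every row index s of C and every j ∈ I_Z). Then for every w ∈ ℝⁿ: (i) C (D Bᵀ B w) = 0; and (ii) if in addition (B w)_r = 0 for every row index r of B that is not of the form Z j for some j ∈ I_Z, then B (D Bᵀ B w) = B w. (Matrix form of Lemma 3.4: for w ∈ W̃_h the vector v with coefficient vector D Bᵀ_Γ B_Γ w again satisfies the primal (vertex) constraints, and if w moreover lies in the dual space W̃_{h,Δ} then B_Γ v = B_Γ w.) -/
open Matrix

open Classical in
/-- Matrix form of Lemma 3.4: `v = D Bᵀ B w` satisfies the primal constraints,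
and if `(B w)_r = 0` for every constraint row not in the image of `Z`, then
`B v = B w`. -/
theorem primal_and_jump_preserved {m n p : ℕ} (hm : 0 < m) (hn : 0 < n)
    (B : Matrix (Fin m) (Fin n) ℝ)
    (hB : ∀ r : Fin m, ∃ jr : Fin n, B r jr = 1 ∧ ∀ j : Fin n, j ≠ jr → B r j ≤ 0)
    (IZ : Finset (Fin n))
    (hIZ : ∀ j : Fin n, j ∈ IZ ↔
      ∃ r : Fin m, B r j = 1 ∧ ∀ r' : Fin m, r' ≠ r → B r' j = 0)
    (Z : Fin n → Fin m)
    (hZ : ∀ j ∈ IZ, B (Z j) j = 1 ∧ ∀ r : Fin m, r ≠ Z j → B r j = 0)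
    (D : Matrix (Fin n) (Fin n) ℝ)
    (hD : D = Matrix.diagonal (fun j => if j ∈ IZ then (1 : ℝ) else 0))
    (C : Matrix (Fin p) (Fin n) ℝ)
    (hC : ∀ (s : Fin p) (j : Fin n), j ∈ IZ → C s j = 0) :
    ∀ w : Fin n → ℝ,
      C.mulVec (D.mulVec (Bᵀ.mulVec (B.mulVec w))) = 0 ∧
      ((∀ r : Fin m, (¬ ∃ j ∈ IZ, Z j = r) → B.mulVec w r = 0) →
        B.mulVec (D.mulVec (Bᵀ.mulVec (B.mulVec w))) = B.mulVec w) := by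
  intro w
  set v := B.mulVec w with hv
  set u := D.mulVec (Bᵀ.mulVec v) with hu
  -- key: u j = if j ∈ IZ then v (Z j) else 0
  have hukey : ∀ j : Fin n, u j = if j ∈ IZ then v (Z j) else 0 := by
    intro j
    rw [hu, hD, Matrix.mulVec_diagonal]
    by_cases hj : j ∈ IZ
    · simp only [hj, if_true, one_mul]
      show (∑ r, Bᵀ j r * v r) = v (Z j)
      rw [Finset.sum_eq_single (Z j)]
      · rw [Matrix.transpose_apply, (hZ j hj).1, one_mul]
      · intro r _ hr
        rw [Matrix.transpose_apply, (hZ j hj).2 r hr, zero_mul]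
      · intro h; exact absurd (Finset.mem_univ _) h
    · simp [hj]
  constructor
  · funext s
    show (∑ j, C s j * u j) = 0
    apply Finset.sum_eq_zero
    intro j _
    by_cases hj : j ∈ IZ
    · rw [hC s j hj, zero_mul]
    · rw [hukey j, if_neg hj, mul_zero]
  · intro hdual
    funext r
    show (∑ j, B r j * u j) = v r
    by_cases hex : ∃ j ∈ IZ, Z j = r
    · obtain ⟨j0, hj0, hZj0⟩ := hex
      rw [Finset.sum_eq_single j0]
      · rw [hukey j0, if_pos hj0, hZj0, ← hZj0, (hZ j0 hj0).1, one_mul]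
      · intro j _ hj
        by_cases hjI : j ∈ IZ
        · by_cases hZj : Z j = r
          · exfalso
            obtain ⟨jr, hjr1, hjr2⟩ := hB r
            have h1 : B r j = 1 := by rw [← hZj]; exact (hZ j hjI).1
            have h2 : B r j0 = 1 := by rw [← hZj0]; exact (hZ j0 hj0).1
            have e1 : j = jr := by
              by_contra hne
              have := hjr2 j hne; linarith
            have e2 : j0 = jr := by
              by_contra hne
              have := hjr2 j0 hne; linarith
            exact hj (e1.trans e2.symm)
          · rw [(hZ j hjI).2 r (fun h => hZj h.symm), zero_mul]
        · rw [hukey j, if_neg hjI, mul_zero]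
      · intro h; exact absurd (Finset.mem_univ _) h
    · rw [hdual r hex]
      apply Finset.sum_eq_zero
      intro j _
      by_cases hjI : j ∈ IZ
      · have : Z j ≠ r := fun h => hex ⟨j, hjI, h⟩
        rw [(hZ j hjI).2 r (fun h => this h.symm), zero_mul]
      · rw [hukey j, if_neg hjI, mul_zero]
end

section
/- The matrix P := D Bᵀ B is idempotent: (D Bᵀ B) · (D Bᵀ B) = D Bᵀ B. (The selection-scaled jump operator of the IETI-DP method is a projection; this follows from the structural properties of B and D established in Section 3.) -/
open Matrix

open Classical in
/-- The selection-scaled jump operator `P = D Bᵀ B` is a projection. -/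
theorem DBtB_idempotent {m n : ℕ} (hm : 0 < m) (hn : 0 < n)
    (B : Matrix (Fin m) (Fin n) ℝ)
    (hB : ∀ r : Fin m, ∃ jr : Fin n, B r jr = 1 ∧ ∀ j : Fin n, j ≠ jr → B r j ≤ 0)
    (IZ : Finset (Fin n))
    (hIZ : ∀ j : Fin n, j ∈ IZ ↔
      ∃ r : Fin m, B r j = 1 ∧ ∀ r' : Fin m, r' ≠ r → B r' j = 0)
    (Z : Fin n → Fin m)
    (hZ : ∀ j ∈ IZ, B (Z j) j = 1 ∧ ∀ r : Fin m, r ≠ Z j → B r j = 0)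
    (D : Matrix (Fin n) (Fin n) ℝ)
    (hD : D = Matrix.diagonal (fun j => if j ∈ IZ then (1 : ℝ) else 0)) :
    (D * Bᵀ * B) * (D * Bᵀ * B) = D * Bᵀ * B := by
  -- key structural fact
  have key : ∀ j ∈ IZ, ∀ l ∈ IZ, l ≠ j → B (Z j) l = 0 := by
    intro j hj l hl hlj
    by_cases h : Z j = Z l
    · exfalso
      obtain ⟨jr, h1, h2⟩ := hB (Z j)
      have hj1 : B (Z j) j = 1 := (hZ j hj).1
      have hl1 : B (Z j) l = 1 := by rw [h]; exact (hZ l hl).1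
      by_cases hj' : j = jr
      · have := h2 l (by rw [hj'] at hlj; exact hlj); linarith
      · have := h2 j hj'; linarith
    · exact (hZ l hl).2 (Z j) h
  have hP : ∀ j k, (D * Bᵀ * B) j k = if j ∈ IZ then B (Z j) k else 0 := by
    intro j k
    rw [hD, Matrix.mul_assoc, Matrix.diagonal_mul]
    by_cases hj : j ∈ IZ
    · simp only [hj, if_true, one_mul, Matrix.mul_apply, Matrix.transpose_apply]
      rw [Finset.sum_eq_single (Z j)]
      · rw [(hZ j hj).1, one_mul]
      · intro r _ hr
        rw [(hZ j hj).2 r hr, zero_mul]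
      · intro h; exact absurd (Finset.mem_univ _) h
    · simp [hj]
  ext j k
  rw [Matrix.mul_apply, hP]
  by_cases hj : j ∈ IZ
  · simp only [hj, if_true]
    calc ∑ l, (D * Bᵀ * B) j l * (D * Bᵀ * B) l k
        = ∑ l, (if j ∈ IZ then B (Z j) l else 0) * (if l ∈ IZ then B (Z l) k else 0) := by
          simp_rw [hP]
      _ = B (Z j) k := by
          rw [Finset.sum_eq_single j]
          · simp [hj, (hZ j hj).1]
          · intro l _ hlj
            by_cases hl : l ∈ IZ
            · simp [hj, hl, key j hj l hl hlj]
            · simp [hl]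
          · intro h; exact absurd (Finset.mem_univ _) h
  · simp only [hj, if_false]
    apply Finset.sum_eq_zero
    intro l _
    rw [hP]
    simp [hj]
end

section
/- As functions on T, the identity ∑_{i ∈ I, i ≠ i₁, i ≠ i₂} (w i − ∑_{j ∈ J} E i j · ω j) • φ i = w_k − w_ℓ − ∑_{α ∈ {1,2}} (w_k(x_α) − w_ℓ(x_α)) • φ i_α holds. (The interface identity established in the proof of Lemma 3.3: on a shared interface, the selection-scaled jump coefficients reproduce the difference of the two traces up to nodal correction terms at the interface endpoints.) -/
/-- The interface identity from the proof of Lemma 3.3: on a shared interface,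
the selection-scaled jump coefficients reproduce the difference of the two
traces up to nodal correction terms at the interface endpoints. -/
theorem interface_identity {T : Type*} {ι κ : Type*} [Fintype ι] [Fintype κ]
    [DecidableEq ι]
    (x₁ x₂ : T) (i₁ i₂ : ι) (hi : i₁ ≠ i₂)
    (φ : ι → T → ℝ) (ψ : κ → T → ℝ) (E : ι → κ → ℝ)
    (hrefine : ∀ j : κ, ψ j = ∑ i : ι, E i j • φ i)
    (hnodal₁ : ∀ i : ι, φ i x₁ = if i = i₁ then 1 else 0)
    (hnodal₂ : ∀ i : ι, φ i x₂ = if i = i₂ then 1 else 0)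
    (w : ι → ℝ) (ω : κ → ℝ)
    (wk wl : T → ℝ)
    (hwk : wk = ∑ i : ι, w i • φ i)
    (hwl : wl = ∑ j : κ, ω j • ψ j) :
    ∑ i ∈ Finset.univ.filter (fun i : ι => i ≠ i₁ ∧ i ≠ i₂),
        (w i - ∑ j : κ, E i j * ω j) • φ i =
      wk - wl - ((wk x₁ - wl x₁) • φ i₁ + (wk x₂ - wl x₂) • φ i₂) := by
  set c : ι → ℝ := fun i => w i - ∑ j : κ, E i j * ω j with hc
  have hdiff : wk - wl = ∑ i : ι, c i • φ i := by
    funext x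
    simp only [hwk, hwl, hrefine, Pi.sub_apply, Finset.sum_apply, Pi.smul_apply,
      smul_eq_mul, Finset.mul_sum, hc, sub_mul, Finset.sum_sub_distrib, Finset.sum_mul]
    rw [Finset.sum_comm]
    congr 1
    exact Finset.sum_congr rfl fun i _ => Finset.sum_congr rfl fun j _ => by ring
  have heval : ∀ x : T, (wk - wl) x = ∑ i : ι, c i * φ i x := by
    intro x; rw [hdiff]; simp [Finset.sum_apply]
  have h1 : wk x₁ - wl x₁ = c i₁ := by
    have := heval x₁
    simpa [hnodal₁, mul_ite] using this
  have h2 : wk x₂ - wl x₂ = c i₂ := by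
    have := heval x₂
    simpa [hnodal₂, mul_ite] using this
  rw [h1, h2, hdiff]
  have hsplit : (∑ i : ι, c i • φ i) =
      (∑ i ∈ Finset.univ.filter (fun i : ι => i ≠ i₁ ∧ i ≠ i₂), c i • φ i)
        + (c i₁ • φ i₁ + c i₂ • φ i₂) := by
    rw [← Finset.sum_filter_add_sum_filter_not Finset.univ
        (fun i : ι => i ≠ i₁ ∧ i ≠ i₂) (fun i => c i • φ i)]
    congr 1
    have : Finset.univ.filter (fun i : ι => ¬(i ≠ i₁ ∧ i ≠ i₂)) = {i₁, i₂} := by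
      ext i; simp only [Finset.mem_filter, Finset.mem_univ, true_and, not_and_or, not_not, Finset.mem_insert, Finset.mem_singleton]
    rw [this, Finset.sum_pair hi]
  rw [hsplit]; abel
end

section
/- If the two traces agree at the interface endpoints, i.e. w_k(x₁) = w_ℓ(x₁) and w_k(x₂) = w_ℓ(x₂), then ∑_{i ∈ I, i ≠ i₁, i ≠ i₂} (w i − ∑_{j ∈ J} E i j · ω j) • φ i = w_k − w_ℓ as functions on T. (Lemma 3.3 of the paper, single-interface form: for vertex-continuous skeleton functions, the function with coefficient vector D Bᵀ_Γ B_Γ w restricted to the refined side of an interface equals the jump w_h^{(k)} − w_h^{(ℓ)} across that interface.) -/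
/-- Lemma 3.3, single-interface form: if the two traces agree at the interface
endpoints, then the selection-scaled jump coefficients reproduce exactly the
jump of the traces across that interface. -/
theorem interface_jump {T : Type*} {ι κ : Type*} [Fintype ι] [Fintype κ]
    [DecidableEq ι]
    (x₁ x₂ : T) (i₁ i₂ : ι) (hi : i₁ ≠ i₂)
    (φ : ι → T → ℝ) (ψ : κ → T → ℝ) (E : ι → κ → ℝ)
    (hrefine : ∀ j : κ, ψ j = ∑ i : ι, E i j • φ i)
    (hnodal₁ : ∀ i : ι, φ i x₁ = if i = i₁ then 1 else 0)
    (hnodal₂ : ∀ i : ι, φ i x₂ = if i = i₂ then 1 else 0)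
    (w : ι → ℝ) (ω : κ → ℝ)
    (wk wl : T → ℝ)
    (hwk : wk = ∑ i : ι, w i • φ i)
    (hwl : wl = ∑ j : κ, ω j • ψ j)
    (hx₁ : wk x₁ = wl x₁) (hx₂ : wk x₂ = wl x₂) :
    ∑ i ∈ Finset.univ.filter (fun i : ι => i ≠ i₁ ∧ i ≠ i₂),
        (w i - ∑ j : κ, E i j * ω j) • φ i = wk - wl := by
  have hk1 : wk x₁ = w i₁ := by
    simp [hwk, Finset.sum_apply, hnodal₁, mul_ite]
  have hk2 : wk x₂ = w i₂ := by
    simp [hwk, Finset.sum_apply, hnodal₂, mul_ite]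
  have hl1 : wl x₁ = ∑ j : κ, E i₁ j * ω j := by
    simp only [hwl, Finset.sum_apply, Pi.smul_apply, smul_eq_mul, hrefine,
      hnodal₁, mul_ite, mul_one, mul_zero, Finset.sum_ite_eq', Finset.mem_univ,
      if_true]
    exact Finset.sum_congr rfl fun j _ => mul_comm _ _
  have hl2 : wl x₂ = ∑ j : κ, E i₂ j * ω j := by
    simp only [hwl, Finset.sum_apply, Pi.smul_apply, smul_eq_mul, hrefine,
      hnodal₂, mul_ite, mul_one, mul_zero, Finset.sum_ite_eq', Finset.mem_univ,
      if_true]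
    exact Finset.sum_congr rfl fun j _ => mul_comm _ _
  have hc1 : w i₁ - ∑ j : κ, E i₁ j * ω j = 0 := by
    rw [← hk1, ← hl1, hx₁, sub_self]
  have hc2 : w i₂ - ∑ j : κ, E i₂ j * ω j = 0 := by
    rw [← hk2, ← hl2, hx₂, sub_self]
  have hfull : ∑ i ∈ Finset.univ.filter (fun i : ι => i ≠ i₁ ∧ i ≠ i₂),
      (w i - ∑ j : κ, E i j * ω j) • φ i
      = ∑ i : ι, (w i - ∑ j : κ, E i j * ω j) • φ i := by
    rw [Finset.sum_filter]
    refine Finset.sum_congr rfl fun i _ => ?_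
    by_cases h1 : i = i₁
    · subst h1; simp [hc1]
    by_cases h2 : i = i₂
    · subst h2; simp [hc2]
    · simp [h1, h2]
  rw [hfull]
  funext x
  simp only [hwk, hwl, Finset.sum_apply, Pi.smul_apply, smul_eq_mul, Pi.sub_apply,
    sub_mul, Finset.sum_sub_distrib, hrefine, Finset.sum_mul]
  congr 1
  simp only [Finset.mul_sum]
  rw [Finset.sum_comm]
  exact Finset.sum_congr rfl fun i _ => Finset.sum_congr rfl fun j _ => by ring
end
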